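/- arXiv:math/0504319 — 2 statements merged into one kernel-verified Lean document; each statement's English description precedes it below -/
import Mathlib

section
/- Let m ≥ 1, let A : ℝ^m × ℝ^m → ℝ^m × ℝ^m be an invertible linear map, and let S1, S2, S3, S4 and S1′, S2′, S3′, S4′ be real m×m matrices such that A maps the graph {(x, Si x)} onto the graph {(x, Si′ x)} for each i = 1,…,4. Assume that S1 − S4, S3 − S2, S1′ − S4′ and S3′ − S2′ are invertible. Then the matrix (S1′ − S4′)^{-1}(S4′ − S3′)(S3′ − S2′)^{-1}(S2′ − S1′) is similar (conjugate by an invertible matrix) to (S1 − S4)^{-1}(S4 − S3)(S3 − S2)^{-1}(S2 − S1). In other words, the conjugacy class of (S1 − S4)^{-1}(S4 − S3)(S3 − S2)^{-1}(S2 − S1) does not depend on the choice of coordinates identifying the ambient space with ℝ^m × ℝ^m. -/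
/-- The graph of an `m × m` real matrix `S`: the subspace
`{(x, Sx) : x ∈ ℝ^m}` of `ℝ^m × ℝ^m`. -/
def matrixGraph {m : ℕ} (S : Matrix (Fin m) (Fin m) ℝ) :
    Set ((Fin m → ℝ) × (Fin m → ℝ)) :=
  {p | p.2 = S.mulVec p.1}

section Aux

variable {m : ℕ}

/-- From the graph condition, extract the fundamental relation and the
invertibility of `a + b * S`. -/
lemma graph_cond (A : ((Fin m → ℝ) × (Fin m → ℝ)) ≃ₗ[ℝ] ((Fin m → ℝ) × (Fin m → ℝ)))
    (a b c d S S' : Matrix (Fin m) (Fin m) ℝ)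
    (hrepr : ∀ p : (Fin m → ℝ) × (Fin m → ℝ),
      A p = (a.mulVec p.1 + b.mulVec p.2, c.mulVec p.1 + d.mulVec p.2))
    (hA : A '' matrixGraph S = matrixGraph S') :
    c + d * S = S' * (a + b * S) ∧ IsUnit (a + b * S) := by
  have hmem : ∀ x : Fin m → ℝ,
      c.mulVec x + d.mulVec (S.mulVec x) = S'.mulVec (a.mulVec x + b.mulVec (S.mulVec x)) := by
    intro x
    have hx : (x, S.mulVec x) ∈ matrixGraph S := rfl
    have : A (x, S.mulVec x) ∈ matrixGraph S' := by
      rw [← hA]; exact Set.mem_image_of_mem _ hx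
    rw [hrepr] at this
    exact this
  have hfund : c + d * S = S' * (a + b * S) := by
    have h' : ∀ x, (c + d * S).mulVec x = (S' * (a + b * S)).mulVec x := by
      intro x
      simp only [Matrix.add_mulVec, ← Matrix.mulVec_mulVec, Matrix.mulVec_add]
      simpa [Matrix.mulVec_add] using hmem x
    have := Matrix.toLin'.injective (LinearMap.ext fun x => by
      simpa [Matrix.toLin'_apply] using h' x)
    exact this
  refine ⟨hfund, ?_⟩
  rw [← Matrix.mulVec_injective_iff_isUnit]
  intro u v huv
  have key : ∀ w : Fin m → ℝ, (a + b * S).mulVec w = 0 → w = 0 := by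
    intro w hw
    have h2 : (c + d * S).mulVec w = 0 := by
      rw [hfund, ← Matrix.mulVec_mulVec, hw, Matrix.mulVec_zero]
    have hA0 : A (w, S.mulVec w) = 0 := by
      rw [hrepr]
      have h1 : a.mulVec w + b.mulVec (S.mulVec w) = 0 := by
        rw [Matrix.mulVec_mulVec, ← Matrix.add_mulVec]; exact hw
      have h2' : c.mulVec w + d.mulVec (S.mulVec w) = 0 := by
        rw [Matrix.mulVec_mulVec, ← Matrix.add_mulVec]; exact h2
      simp only [Prod.ext_iff, Prod.fst_zero, Prod.snd_zero]
      refine ⟨?_, ?_⟩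
      · exact h1
      · exact h2'
    have h0 : A (w, S.mulVec w) = A 0 := by rw [hA0, map_zero]
    have := A.injective h0
    exact (Prod.ext_iff.mp this).1
  have : u - v = 0 := by
    apply key
    rw [Matrix.mulVec_sub, huv, sub_self]
  exact sub_eq_zero.mp this

/-- The key algebraic identity. -/
lemma keyA (a b c d Si Sj Si' Sj' : Matrix (Fin m) (Fin m) ℝ)
    (hi : c + d * Si = Si' * (a + b * Si))
    (hj : c + d * Sj = Sj' * (a + b * Sj)) :
    (Si' - Sj') * (a + b * Si) = (d - Sj' * b) * (Si - Sj) := by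
  have h : (Si' - Sj') * (a + b * Si) - (d - Sj' * b) * (Si - Sj) =
      (Si' * (a + b * Si) - (c + d * Si)) - (Sj' * (a + b * Sj) - (c + d * Sj)) := by
    noncomm_ring
  rw [← hi, ← hj, sub_self, sub_self, sub_zero] at h
  exact sub_eq_zero.mp h

end Aux

/-- The conjugacy class of `(S1 - S4)⁻¹ (S4 - S3) (S3 - S2)⁻¹ (S2 - S1)` (the
cross-ratio of the tuple of graphs of `S1, S2, S3, S4`) does not depend on the
choice of linear coordinates identifying the ambient space with `ℝ^m × ℝ^m`. -/
theorem statement2 (m : ℕ) (hm : 1 ≤ m)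
    (A : ((Fin m → ℝ) × (Fin m → ℝ)) ≃ₗ[ℝ] ((Fin m → ℝ) × (Fin m → ℝ)))
    (S1 S2 S3 S4 S1' S2' S3' S4' : Matrix (Fin m) (Fin m) ℝ)
    (hA1 : A '' matrixGraph S1 = matrixGraph S1')
    (hA2 : A '' matrixGraph S2 = matrixGraph S2')
    (hA3 : A '' matrixGraph S3 = matrixGraph S3')
    (hA4 : A '' matrixGraph S4 = matrixGraph S4')
    (h14 : IsUnit (S1 - S4)) (h32 : IsUnit (S3 - S2))
    (h14' : IsUnit (S1' - S4')) (h32' : IsUnit (S3' - S2')) :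
    ∃ P : Matrix (Fin m) (Fin m) ℝ, IsUnit P ∧
      (S1' - S4')⁻¹ * (S4' - S3') * (S3' - S2')⁻¹ * (S2' - S1') =
        P * ((S1 - S4)⁻¹ * (S4 - S3) * (S3 - S2)⁻¹ * (S2 - S1)) * P⁻¹ := by
  classical
  -- extract the block matrices of A
  set aL := (LinearMap.fst ℝ (Fin m → ℝ) (Fin m → ℝ)) ∘ₗ A.toLinearMap ∘ₗ
    (LinearMap.inl ℝ (Fin m → ℝ) (Fin m → ℝ)) with haL
  set bL := (LinearMap.fst ℝ (Fin m → ℝ) (Fin m → ℝ)) ∘ₗ A.toLinearMap ∘ₗ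
    (LinearMap.inr ℝ (Fin m → ℝ) (Fin m → ℝ)) with hbL
  set cL := (LinearMap.snd ℝ (Fin m → ℝ) (Fin m → ℝ)) ∘ₗ A.toLinearMap ∘ₗ
    (LinearMap.inl ℝ (Fin m → ℝ) (Fin m → ℝ)) with hcL
  set dL := (LinearMap.snd ℝ (Fin m → ℝ) (Fin m → ℝ)) ∘ₗ A.toLinearMap ∘ₗ
    (LinearMap.inr ℝ (Fin m → ℝ) (Fin m → ℝ)) with hdL
  set a := LinearMap.toMatrix' aL with ha
  set b := LinearMap.toMatrix' bL with hb
  set c := LinearMap.toMatrix' cL with hc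
  set d := LinearMap.toMatrix' dL with hd
  have hmv : ∀ (L : (Fin m → ℝ) →ₗ[ℝ] (Fin m → ℝ)) (x : Fin m → ℝ),
      (LinearMap.toMatrix' L).mulVec x = L x := by
    intro L x
    rw [← Matrix.toLin'_apply, Matrix.toLin'_toMatrix']
  have hrepr : ∀ p : (Fin m → ℝ) × (Fin m → ℝ),
      A p = (a.mulVec p.1 + b.mulVec p.2, c.mulVec p.1 + d.mulVec p.2) := by
    intro p
    rw [ha, hb, hc, hd, hmv, hmv, hmv, hmv]
    have hp : p = (p.1, 0) + (0, p.2) := by simp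
    have : A p = A (p.1, 0) + A (0, p.2) := by rw [← map_add, ← hp]
    rw [this]
    simp [haL, hbL, hcL, hdL, Prod.ext_iff]
  obtain ⟨hf1, hE1⟩ := graph_cond A a b c d S1 S1' hrepr hA1
  obtain ⟨hf2, hE2⟩ := graph_cond A a b c d S2 S2' hrepr hA2
  obtain ⟨hf3, hE3⟩ := graph_cond A a b c d S3 S3' hrepr hA3
  obtain ⟨hf4, hE4⟩ := graph_cond A a b c d S4 S4' hrepr hA4
  set E1 := a + b * S1 with hE1def
  set E3 := a + b * S3 with hE3def
  set G4 := d - S4' * b with hG4def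
  set G2 := d - S2' * b with hG2def
  -- the four difference identities
  have k14 : (S1' - S4') * E1 = G4 * (S1 - S4) := keyA a b c d S1 S4 S1' S4' hf1 hf4
  have k34 : (S3' - S4') * E3 = G4 * (S3 - S4) := keyA a b c d S3 S4 S3' S4' hf3 hf4
  have k32 : (S3' - S2') * E3 = G2 * (S3 - S2) := keyA a b c d S3 S2 S3' S2' hf3 hf2
  have k12 : (S1' - S2') * E1 = G2 * (S1 - S2) := keyA a b c d S1 S2 S1' S2' hf1 hf2
  have k43 : (S4' - S3') * E3 = G4 * (S4 - S3) := by
    rw [← neg_sub S3' S4', ← neg_sub S3 S4, Matrix.neg_mul, k34, Matrix.mul_neg]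
  have k21 : (S2' - S1') * E1 = G2 * (S2 - S1) := by
    rw [← neg_sub S1' S2', ← neg_sub S1 S2, Matrix.neg_mul, k12, Matrix.mul_neg]
  -- determinant unit facts
  have hdE1 : IsUnit E1.det := (Matrix.isUnit_iff_isUnit_det _).mp hE1
  have hdE3 : IsUnit E3.det := (Matrix.isUnit_iff_isUnit_det _).mp hE3
  have hd14 : IsUnit (S1 - S4).det := (Matrix.isUnit_iff_isUnit_det _).mp h14
  have hd32 : IsUnit (S3 - S2).det := (Matrix.isUnit_iff_isUnit_det _).mp h32
  have hd14' : IsUnit (S1' - S4').det := (Matrix.isUnit_iff_isUnit_det _).mp h14'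
  have hd32' : IsUnit (S3' - S2').det := (Matrix.isUnit_iff_isUnit_det _).mp h32'
  -- G4 and G2 are invertible
  have hdG4 : IsUnit G4.det := by
    have : (S1' - S4').det * E1.det = G4.det * (S1 - S4).det := by
      rw [← Matrix.det_mul, ← Matrix.det_mul, k14]
    exact isUnit_of_mul_isUnit_left (this ▸ hd14'.mul hdE1 :
      IsUnit (G4.det * (S1 - S4).det))
  have hdG2 : IsUnit G2.det := by
    have : (S3' - S2').det * E3.det = G2.det * (S3 - S2).det := by
      rw [← Matrix.det_mul, ← Matrix.det_mul, k32]
    exact isUnit_of_mul_isUnit_left (this ▸ hd32'.mul hdE3 :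
      IsUnit (G2.det * (S3 - S2).det))
  -- express primed differences
  have hD1' : S1' - S4' = G4 * (S1 - S4) * E1⁻¹ := by
    rw [← k14, Matrix.mul_assoc, Matrix.mul_nonsing_inv _ hdE1, Matrix.mul_one]
  have hD2' : S4' - S3' = G4 * (S4 - S3) * E3⁻¹ := by
    rw [← k43, Matrix.mul_assoc, Matrix.mul_nonsing_inv _ hdE3, Matrix.mul_one]
  have hD3' : S3' - S2' = G2 * (S3 - S2) * E3⁻¹ := by
    rw [← k32, Matrix.mul_assoc, Matrix.mul_nonsing_inv _ hdE3, Matrix.mul_one]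
  have hD4' : S2' - S1' = G2 * (S2 - S1) * E1⁻¹ := by
    rw [← k21, Matrix.mul_assoc, Matrix.mul_nonsing_inv _ hdE1, Matrix.mul_one]
  have hinv1 : (S1' - S4')⁻¹ = E1 * (S1 - S4)⁻¹ * G4⁻¹ := by
    apply Matrix.inv_eq_left_inv
    rw [hD1']
    calc E1 * (S1 - S4)⁻¹ * G4⁻¹ * (G4 * (S1 - S4) * E1⁻¹)
        = E1 * (S1 - S4)⁻¹ * (G4⁻¹ * G4) * (S1 - S4) * E1⁻¹ := by
          simp only [Matrix.mul_assoc]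
      _ = 1 := by
          rw [Matrix.nonsing_inv_mul _ hdG4, Matrix.mul_one, Matrix.mul_assoc E1,
            Matrix.nonsing_inv_mul _ hd14, Matrix.mul_one, Matrix.mul_nonsing_inv _ hdE1]
  have hinv3 : (S3' - S2')⁻¹ = E3 * (S3 - S2)⁻¹ * G2⁻¹ := by
    apply Matrix.inv_eq_left_inv
    rw [hD3']
    calc E3 * (S3 - S2)⁻¹ * G2⁻¹ * (G2 * (S3 - S2) * E3⁻¹)
        = E3 * (S3 - S2)⁻¹ * (G2⁻¹ * G2) * (S3 - S2) * E3⁻¹ := by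
          simp only [Matrix.mul_assoc]
      _ = 1 := by
          rw [Matrix.nonsing_inv_mul _ hdG2, Matrix.mul_one, Matrix.mul_assoc E3,
            Matrix.nonsing_inv_mul _ hd32, Matrix.mul_one, Matrix.mul_nonsing_inv _ hdE3]
  refine ⟨E1, hE1, ?_⟩
  rw [hinv1, hD2', hinv3, hD4']
  calc E1 * (S1 - S4)⁻¹ * G4⁻¹ * (G4 * (S4 - S3) * E3⁻¹) * (E3 * (S3 - S2)⁻¹ * G2⁻¹) *
        (G2 * (S2 - S1) * E1⁻¹)
      = E1 * ((S1 - S4)⁻¹ * ((G4⁻¹ * G4) * ((S4 - S3) * ((E3⁻¹ * E3) * ((S3 - S2)⁻¹ *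
        ((G2⁻¹ * G2) * ((S2 - S1) * E1⁻¹))))))) := by
        simp only [Matrix.mul_assoc]
    _ = E1 * ((S1 - S4)⁻¹ * (S4 - S3) * (S3 - S2)⁻¹ * (S2 - S1)) * E1⁻¹ := by
        rw [Matrix.nonsing_inv_mul _ hdG4, Matrix.nonsing_inv_mul _ hdE3,
          Matrix.nonsing_inv_mul _ hdG2, Matrix.one_mul, Matrix.one_mul, Matrix.one_mul]
        simp only [Matrix.mul_assoc]
end

section
/- Let n ≥ 5 and use coordinates (x, p0, p1, …, p_{n−3}, q) on ℝ^n. Consider the smooth vector fields X1 = ∂/∂x + Σ_{i=0}^{n−4} p_{i+1}·∂/∂p_i + (p_{n−3})²·∂/∂q and X2 = ∂/∂p_{n−3}, which span the rank 2 distribution D associated with the underdetermined ODE z′(x) = (y^{(n−3)}(x))². Then at every point of ℝ^n: (1) the span of X1, X2 and [X1, X2] is 3-dimensional; (2) the span of X1, X2 together with all iterated Lie brackets of X1, X2 of length at most 3 is 5-dimensional; (3) the span of all iterated Lie brackets of X1 and X2 is all of ℝ^n, i.e. the distribution is completely nonholonomic (bracket-generating). -/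
/-- A (not necessarily smooth) vector field on `ℝ^n`. -/
def VF (n : ℕ) := (Fin n → ℝ) → (Fin n → ℝ)

/-- The Lie bracket of two vector fields `V, W` on `ℝ^n`:
`[V,W](x) = DW(x)·V(x) − DV(x)·W(x)`. -/
noncomputable def vfBracket {n : ℕ} (V W : VF n) : VF n :=
  fun z => fderiv ℝ W z (V z) - fderiv ℝ V z (W z)

/-- In coordinates `(x, p₀, …, p_{n−3}, q)` on `ℝ^n` (coordinate `0` is `x`,
coordinate `i+1` is `p_i` for `0 ≤ i ≤ n−3`, coordinate `n−1` is `q`),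
the vector field `X₁ = ∂/∂x + Σ_{i=0}^{n−4} p_{i+1} ∂/∂p_i + (p_{n−3})² ∂/∂q`
associated with the underdetermined ODE `z′(x) = (y^{(n−3)}(x))²`. -/
noncomputable def fieldX1 (n : ℕ) : VF n := fun z j =>
  if h0 : (j : ℕ) = 0 then 1
  else if h1 : (j : ℕ) = n - 1 then (z ⟨n - 2, by have := j.isLt; omega⟩) ^ 2
  else if (j : ℕ) = n - 2 then 0
  else z ⟨(j : ℕ) + 1, by have := j.isLt; omega⟩

/-- The vector field `X₂ = ∂/∂p_{n−3}`. -/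
def fieldX2 (n : ℕ) : VF n := fun _ j => if (j : ℕ) = n - 2 then 1 else 0

/-- `IsIterBrkt X1 X2 k V` means that `V` is an iterated Lie bracket of the
vector fields `X1`, `X2` of length `k`. -/
inductive IsIterBrkt {n : ℕ} (X1 X2 : VF n) : ℕ → VF n → Prop
  | base1 : IsIterBrkt X1 X2 1 X1
  | base2 : IsIterBrkt X1 X2 1 X2
  | brkt {k l : ℕ} {V W : VF n} : IsIterBrkt X1 X2 k V → IsIterBrkt X1 X2 l W →
      IsIterBrkt X1 X2 (k + l) (vfBracket V W)

/-!
Write `e m` for the `m`-th coordinate vector. `X₂ = e (n-2)` is constant and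
`DX₁ (e m) = e (m-1)` for `2 ≤ m ≤ n-3`, while `DX₁ (e (n-2)) = e (n-3) + 2 p_{n-3} e (n-1)`
because of the `q`-component `p_{n-3}²`. Hence `[X₁,X₂] = -(e (n-3) + 2 p_{n-3} e (n-1))`,
`[X₁,[X₁,X₂]] = e (n-4)`, `[X₂,[X₁,X₂]] = -2 e (n-1)`, and `ad X₁` carries `e m` to `-e (m-1)`.

By antisymmetry and homogeneity of the bracket, every bracket of length `≤ 3` is a combination
of `X₁, X₂, [X₁,X₂], [X₁,[X₁,X₂]], [X₂,[X₁,X₂]]`; in the coordinates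
`x, p_{n-3}, p_{n-4}, p_{n-5}, q` these five vectors form an upper triangular matrix with
nonzero diagonal. Iterating `ad X₁` on `e (n-4)` reaches every `e m` with `m ≥ 1`, and `X₁`,
whose `x`-component is `1`, supplies the last direction.
-/

section LinearAlgebra

variable {K V : Type*} [Field K] [AddCommGroup V] [Module K V]

theorem linearIndependent_of_isUpperTriangular {ι : Type*} {k : ℕ}
    (f : Fin k → ι → K) (σ : Fin k → ι) (hdiag : ∀ i, f i (σ i) ≠ 0)
    (htri : ∀ i j, j < i → f i (σ j) = 0) : LinearIndependent K f := by
  let M : Matrix (Fin k) (Fin k) K := Matrix.of fun i j => f i (σ j)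
  have hM : M.det ≠ 0 := by
    rw [Matrix.det_of_isUpperTriangular (M := M) fun i j hji => htri i j hji]
    exact Finset.prod_ne_zero_iff.2 fun i _ => hdiag i
  exact .of_comp (LinearMap.funLeft K K σ) (Matrix.linearIndependent_rows_of_det_ne_zero hM)

theorem Submodule.eq_top_of_single_mem {ι : Type*} [Fintype ι] [DecidableEq ι]
    (W : Submodule K (ι → K)) (i₀ : ι) (hsingle : ∀ i ≠ i₀, Pi.single i 1 ∈ W)
    {v : ι → K} (hv : v ∈ W) (hvi₀ : v i₀ ≠ 0) : W = ⊤ := by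
  have hi₀ : v i₀ • Pi.single i₀ (1 : K) ∈ W := by
    have hsum := (pi_eq_sum_univ' v).symm
    rw [← Finset.add_sum_erase _ _ (Finset.mem_univ i₀)] at hsum
    rw [eq_sub_of_add_eq hsum]
    exact sub_mem hv (sum_mem fun i hi => smul_mem _ _ (hsingle i (Finset.ne_of_mem_erase hi)))
  rw [eq_top_iff, ← (Pi.basisFun K ι).span_eq, Submodule.span_le]
  rintro _ ⟨i, rfl⟩
  by_cases hi : i = i₀
  · subst hi
    simpa [smul_smul, hvi₀] using W.smul_mem (v i)⁻¹ hi₀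
  · simpa using hsingle i hi

theorem finrank_span_triple {a b c : V} (h : LinearIndependent K ![a, b, c]) :
    Module.finrank K (Submodule.span K {a, b, c}) = 3 := by
  rw [← Fintype.card_fin 3, ← finrank_span_eq_card h, Matrix.range_cons, Matrix.range_cons,
    Matrix.range_cons_empty, Set.singleton_union, Set.singleton_union]

theorem finrank_span_quintuple {a b c d e : V} (h : LinearIndependent K ![a, b, c, d, e]) :
    Module.finrank K (Submodule.span K {a, b, c, d, e}) = 5 := by
  rw [← Fintype.card_fin 5, ← finrank_span_eq_card h, Matrix.range_cons, Matrix.range_cons,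
    Matrix.range_cons, Matrix.range_cons, Matrix.range_cons_empty, Set.singleton_union,
    Set.singleton_union, Set.singleton_union, Set.singleton_union]

theorem LinearIndependent.triple_of_quintuple {a b c d e : V}
    (h : LinearIndependent K ![a, b, c, d, e]) : LinearIndependent K ![a, b, c] := by
  convert h.comp _ (Fin.castLE_injective (show 3 ≤ 5 by norm_num))
  funext i
  fin_cases i <;> rfl

end LinearAlgebra

namespace vfBracket

variable {n : ℕ}

theorem swap_apply (V W : VF n) (z : Fin n → ℝ) : vfBracket W V z = -vfBracket V W z := by
  simp [vfBracket]

theorem self_apply (V : VF n) (z : Fin n → ℝ) : vfBracket V V z = 0 :=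
  sub_self _

theorem smul_right (V W : VF n) (c : ℝ) :
    vfBracket V (fun z => c • W z) = fun z => c • vfBracket V W z := by
  funext z
  have h : fderiv ℝ (fun z => c • W z) z = c • fderiv ℝ W z :=
    congrFun (fderiv_const_smul_field (f := W) c) z
  simp [vfBracket, h, smul_sub]

theorem smul_left (V W : VF n) (c : ℝ) :
    vfBracket (fun z => c • V z) W = fun z => c • vfBracket V W z := by
  funext z
  have h : fderiv ℝ (fun z => c • V z) z = c • fderiv ℝ V z :=
    congrFun (fderiv_const_smul_field (f := V) c) z
  simp [vfBracket, h, smul_sub]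

theorem const_right (V : VF n) (w z : Fin n → ℝ) :
    vfBracket V (fun _ => w) z = -fderiv ℝ V z w := by
  simp [vfBracket]

end vfBracket

namespace IsIterBrkt

variable {n : ℕ} {X1 X2 V : VF n} {k : ℕ}

theorem one_le (h : IsIterBrkt X1 X2 k V) : 1 ≤ k := by
  induction h <;> omega

theorem eq_or_eq_of_one (h : IsIterBrkt X1 X2 1 V) : V = X1 ∨ V = X2 := by
  generalize hk : 1 = k at h
  cases h with
  | base1 => exact .inl rfl
  | base2 => exact .inr rfl
  | brkt hU hW => have := hU.one_le; have := hW.one_le; omega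

theorem exists_eq_smul_of_two (h : IsIterBrkt X1 X2 2 V) :
    ∃ c : ℝ, V = fun z => c • vfBracket X1 X2 z := by
  generalize hk : 2 = k at h
  cases h with
  | base1 | base2 => omega
  | @brkt k l U W hU hW =>
    have := hU.one_le; have := hW.one_le
    obtain ⟨rfl, rfl⟩ : k = 1 ∧ l = 1 := by omega
    rcases hU.eq_or_eq_of_one with hU | hU <;> rcases hW.eq_or_eq_of_one with hW | hW <;>
      subst U W
    · exact ⟨0, funext fun z => by simp [vfBracket.self_apply]⟩
    · exact ⟨1, funext fun z => by simp⟩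
    · exact ⟨-1, funext fun z => by simp [vfBracket.swap_apply X1]⟩
    · exact ⟨0, funext fun z => by simp [vfBracket.self_apply]⟩

theorem exists_eq_of_three (h : IsIterBrkt X1 X2 3 V) :
    ∃ a b : ℝ, ∀ z, V z =
      a • vfBracket X1 (vfBracket X1 X2) z + b • vfBracket X2 (vfBracket X1 X2) z := by
  generalize hk : 3 = k at h
  cases h with
  | base1 | base2 => omega
  | @brkt k l U W hU hW =>
    have := hU.one_le; have := hW.one_le
    obtain ⟨rfl, rfl⟩ | ⟨rfl, rfl⟩ : k = 1 ∧ l = 2 ∨ k = 2 ∧ l = 1 := by omega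
    · obtain ⟨c, rfl⟩ := hW.exists_eq_smul_of_two
      rcases hU.eq_or_eq_of_one with hU | hU <;> subst U
      · exact ⟨c, 0, by simp [vfBracket.smul_right]⟩
      · exact ⟨0, c, by simp [vfBracket.smul_right]⟩
    · obtain ⟨c, rfl⟩ := hU.exists_eq_smul_of_two
      rcases hW.eq_or_eq_of_one with hW | hW <;> subst W
      · exact ⟨-c, 0, by simp [vfBracket.smul_left, vfBracket.swap_apply X1 (vfBracket X1 X2)]⟩
      · exact ⟨0, -c, by simp [vfBracket.smul_left, vfBracket.swap_apply X2 (vfBracket X1 X2)]⟩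

end IsIterBrkt

theorem span_iterBrkt_le_three {n : ℕ} (X1 X2 : VF n) (z : Fin n → ℝ) :
    Submodule.span ℝ {v | ∃ k ≤ 3, ∃ V : VF n, IsIterBrkt X1 X2 k V ∧ v = V z} =
      Submodule.span ℝ {X1 z, X2 z, vfBracket X1 X2 z, vfBracket X1 (vfBracket X1 X2) z,
        vfBracket X2 (vfBracket X1 X2) z} := by
  have h2 : IsIterBrkt X1 X2 2 (vfBracket X1 X2) := .brkt .base1 .base2
  apply le_antisymm
  · rw [Submodule.span_le]
    rintro _ ⟨k, hk, V, hV, rfl⟩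
    have := hV.one_le
    interval_cases k
    · rcases hV.eq_or_eq_of_one with rfl | rfl <;> exact Submodule.subset_span (by simp)
    · obtain ⟨c, rfl⟩ := hV.exists_eq_smul_of_two
      exact Submodule.smul_mem _ _ (Submodule.subset_span (by simp))
    · obtain ⟨a, b, hab⟩ := hV.exists_eq_of_three
      rw [hab]
      exact add_mem (Submodule.smul_mem _ _ (Submodule.subset_span (by simp)))
        (Submodule.smul_mem _ _ (Submodule.subset_span (by simp)))
  · have mem : ∀ {k V}, k ≤ 3 → IsIterBrkt X1 X2 k V →
        V z ∈ Submodule.span ℝ {v | ∃ k ≤ 3, ∃ V : VF n, IsIterBrkt X1 X2 k V ∧ v = V z} :=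
      fun hk hV => Submodule.subset_span ⟨_, hk, _, hV, rfl⟩
    rw [Submodule.span_le]
    simp only [Set.insert_subset_iff, Set.singleton_subset_iff, SetLike.mem_coe]
    exact ⟨mem (by norm_num) .base1, mem (by norm_num) .base2, mem (by norm_num) h2,
      mem le_rfl (.brkt .base1 h2), mem le_rfl (.brkt .base2 h2)⟩

section Model

variable {n : ℕ}

/-- The coordinate vector `e m`, indexed by `m : ℕ` so that indices such as `n - 3` need no
bound proofs; it is `Pi.single` for `m < n` and `0` otherwise. -/
def basisVec (n m : ℕ) : Fin n → ℝ := fun j => if (j : ℕ) = m then 1 else 0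

theorem basisVec_val_eq_single (i : Fin n) : basisVec n i = Pi.single i 1 := by
  ext j
  simp [basisVec, Pi.single_apply, Fin.ext_iff, eq_comm]

theorem fieldX2_eq : fieldX2 n = fun _ => basisVec n (n - 2) := rfl

theorem fieldX1_apply_sub_two (hn : 3 ≤ n) (z : Fin n → ℝ) :
    fieldX1 n z ⟨n - 2, by omega⟩ = 0 := by
  simp only [fieldX1]
  split_ifs <;> first | omega | rfl

theorem fderiv_fieldX1_apply (z v : Fin n → ℝ) (j : Fin n) :
    fderiv ℝ (fieldX1 n) z v j =
      if (j : ℕ) = 0 then 0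
      else if h : (j : ℕ) = n - 1 then
        2 * z ⟨n - 2, by have := j.isLt; omega⟩ * v ⟨n - 2, by have := j.isLt; omega⟩
      else if (j : ℕ) = n - 2 then 0
      else v ⟨(j : ℕ) + 1, by have := j.isLt; omega⟩ := by
  have hcomp : ∀ j, DifferentiableAt ℝ (fun z => fieldX1 n z j) z := by
    intro j
    unfold fieldX1
    split_ifs <;> fun_prop
  rw [show fieldX1 n = fun z j => fieldX1 n z j from rfl, fderiv_pi hcomp]
  simp only [ContinuousLinearMap.pi_apply]
  unfold fieldX1
  split_ifs
  · simp
  · rw [((hasFDerivAt_apply _ z).pow 2).fderiv]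
    simp
  · simp
  · rw [(hasFDerivAt_apply _ z).fderiv]
    simp

theorem fderiv_fieldX1_basisVec (z : Fin n → ℝ) {m : ℕ} (hm : 2 ≤ m) (hmn : m + 3 ≤ n) :
    fderiv ℝ (fieldX1 n) z (basisVec n m) = basisVec n (m - 1) := by
  ext j
  simp only [fderiv_fieldX1_apply, basisVec]
  split_ifs <;> first | omega | simp

theorem fderiv_fieldX1_basisVec_sub_two (hn : 4 ≤ n) (z : Fin n → ℝ) :
    fderiv ℝ (fieldX1 n) z (basisVec n (n - 2)) =
      basisVec n (n - 3) + (2 * z ⟨n - 2, by omega⟩) • basisVec n (n - 1) := by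
  ext j
  simp only [fderiv_fieldX1_apply, basisVec, Pi.add_apply, Pi.smul_apply, smul_eq_mul]
  split_ifs <;> first | omega | simp

theorem fderiv_fieldX1_basisVec_sub_one (hn : 2 ≤ n) (z : Fin n → ℝ) :
    fderiv ℝ (fieldX1 n) z (basisVec n (n - 1)) = 0 := by
  ext j
  simp only [fderiv_fieldX1_apply, basisVec, Pi.zero_apply]
  split_ifs <;> first | omega | simp

theorem fderiv_neg_add_coord_smul (a b : Fin n → ℝ) (i : Fin n) (c : ℝ) (z v : Fin n → ℝ) :
    fderiv ℝ (fun z => -(a + (c * z i) • b)) z v = -((c * v i) • b) := by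
  rw [((((hasFDerivAt_apply i z).const_mul c).smul_const b).const_add a).fun_neg.fderiv]
  simp

theorem vfBracket_fieldX1_fieldX2 (hn : 4 ≤ n) :
    vfBracket (fieldX1 n) (fieldX2 n) =
      fun z => -(basisVec n (n - 3) + (2 * z ⟨n - 2, by omega⟩) • basisVec n (n - 1)) := by
  funext z
  rw [fieldX2_eq, vfBracket.const_right, fderiv_fieldX1_basisVec_sub_two hn]

theorem vfBracket_fieldX1_vfBracket_fieldX1_fieldX2 (hn : 5 ≤ n) :
    vfBracket (fieldX1 n) (vfBracket (fieldX1 n) (fieldX2 n)) = fun _ => basisVec n (n - 4) := by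
  funext z
  rw [vfBracket_fieldX1_fieldX2 (by omega)]
  unfold vfBracket
  rw [fderiv_neg_add_coord_smul, fieldX1_apply_sub_two (by omega), map_neg, map_add, map_smul,
    fderiv_fieldX1_basisVec z (by omega) (by omega), fderiv_fieldX1_basisVec_sub_one (by omega)]
  simp [show n - 3 - 1 = n - 4 by omega]

theorem vfBracket_fieldX2_vfBracket_fieldX1_fieldX2 (hn : 4 ≤ n) :
    vfBracket (fieldX2 n) (vfBracket (fieldX1 n) (fieldX2 n)) =
      fun _ => (-2 : ℝ) • basisVec n (n - 1) := by
  funext z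
  rw [vfBracket_fieldX1_fieldX2 hn]
  unfold vfBracket
  rw [fderiv_neg_add_coord_smul, fieldX2_eq]
  simp [basisVec]

theorem vfBracket_fieldX1_const_smul_basisVec (c : ℝ) {m : ℕ} (hm : 2 ≤ m) (hmn : m + 3 ≤ n) :
    vfBracket (fieldX1 n) (fun _ => c • basisVec n m) = fun _ => -c • basisVec n (m - 1) := by
  funext z
  rw [vfBracket.const_right, map_smul, fderiv_fieldX1_basisVec z hm hmn, neg_smul]

theorem linearIndependent_brackets_le_three (hn : 5 ≤ n) (z : Fin n → ℝ) :
    LinearIndependent ℝ ![fieldX1 n z, fieldX2 n z, vfBracket (fieldX1 n) (fieldX2 n) z,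
      vfBracket (fieldX1 n) (vfBracket (fieldX1 n) (fieldX2 n)) z,
      vfBracket (fieldX2 n) (vfBracket (fieldX1 n) (fieldX2 n)) z] := by
  rw [vfBracket_fieldX1_vfBracket_fieldX1_fieldX2 hn,
    vfBracket_fieldX2_vfBracket_fieldX1_fieldX2 (by omega), vfBracket_fieldX1_fieldX2 (by omega)]
  refine linearIndependent_of_isUpperTriangular _
    ![⟨0, by omega⟩, ⟨n - 2, by omega⟩, ⟨n - 3, by omega⟩, ⟨n - 4, by omega⟩, ⟨n - 1, by omega⟩]
    (fun i => ?_) (fun i j hji => ?_)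
  · fin_cases i <;> simp [fieldX1, fieldX2, basisVec, show n - 3 ≠ n - 1 by omega]
  · fin_cases i <;> fin_cases j <;> simp [fieldX1, fieldX2, basisVec] at hji ⊢ <;>
      (try split_ifs) <;> first | omega | simp

theorem exists_isIterBrkt_eq_smul_basisVec {m : ℕ} (hm : 1 ≤ m) (hmn : m + 4 ≤ n) :
    ∃ k V, ∃ c ≠ (0 : ℝ), IsIterBrkt (fieldX1 n) (fieldX2 n) k V ∧
      V = fun _ => c • basisVec n m := by
  obtain ⟨t, ht⟩ : ∃ t, m + t = n - 4 := ⟨n - 4 - m, by omega⟩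
  induction t generalizing m with
  | zero =>
    refine ⟨3, _, 1, one_ne_zero, .brkt .base1 (.brkt .base1 .base2), ?_⟩
    rw [vfBracket_fieldX1_vfBracket_fieldX1_fieldX2 (by omega), show m = n - 4 by omega,
      one_smul]
  | succ t ih =>
    obtain ⟨k, V, c, hc, hV, rfl⟩ := ih (m := m + 1) (by omega) (by omega) (by omega)
    refine ⟨1 + k, _, -c, neg_ne_zero.2 hc, .brkt .base1 hV, ?_⟩
    rw [vfBracket_fieldX1_const_smul_basisVec c (by omega) (by omega), Nat.add_sub_cancel]

theorem basisVec_mem_span_iterBrkt (hn : 5 ≤ n) (z : Fin n → ℝ) {m : ℕ} (hm : 1 ≤ m)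
    (hmn : m < n) :
    basisVec n m ∈ Submodule.span ℝ
      {v | ∃ k, ∃ V : VF n, IsIterBrkt (fieldX1 n) (fieldX2 n) k V ∧ v = V z} := by
  set W := Submodule.span ℝ
    {v | ∃ k, ∃ V : VF n, IsIterBrkt (fieldX1 n) (fieldX2 n) k V ∧ v = V z}
  have mem : ∀ {k V}, IsIterBrkt (fieldX1 n) (fieldX2 n) k V → V z ∈ W :=
    fun hV => Submodule.subset_span ⟨_, _, hV, rfl⟩
  have h2 : IsIterBrkt (fieldX1 n) (fieldX2 n) 2 (vfBracket (fieldX1 n) (fieldX2 n)) :=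
    .brkt .base1 .base2
  have hlast : basisVec n (n - 1) ∈ W := by
    have := W.smul_mem (-1 / 2 : ℝ) (mem (.brkt .base2 h2))
    rwa [vfBracket_fieldX2_vfBracket_fieldX1_fieldX2 (by omega), smul_smul,
      show (-1 / 2 : ℝ) * -2 = 1 by norm_num, one_smul] at this
  obtain hm4 | rfl | rfl | rfl : m + 4 ≤ n ∨ m = n - 3 ∨ m = n - 2 ∨ m = n - 1 := by omega
  · obtain ⟨k, V, c, hc, hV, rfl⟩ := exists_isIterBrkt_eq_smul_basisVec hm hm4
    simpa [smul_smul, hc] using W.smul_mem c⁻¹ (mem hV)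
  · have := W.sub_mem (W.neg_mem (mem h2)) (W.smul_mem (2 * z ⟨n - 2, by omega⟩) hlast)
    rwa [vfBracket_fieldX1_fieldX2 (by omega), neg_neg, add_sub_cancel_right] at this
  · exact mem .base2
  · exact hlast

end Model

/-- The rank 2 distribution on `ℝ^n` (`n ≥ 5`) spanned by `X₁, X₂` (the model
of the underdetermined ODE `z′(x) = (y^{(n−3)}(x))²`) satisfies, at every
point: `dim D² = 3`, `dim D³ = 5`, and it is completely nonholonomic
(bracket-generating). -/
theorem statement12 (n : ℕ) (hn : 5 ≤ n) :
    ∀ z : Fin n → ℝ,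
      Module.finrank ℝ (Submodule.span ℝ
          ({fieldX1 n z, fieldX2 n z, vfBracket (fieldX1 n) (fieldX2 n) z} :
            Set (Fin n → ℝ))) = 3 ∧
      Module.finrank ℝ (Submodule.span ℝ
          {v : Fin n → ℝ | ∃ k ≤ 3, ∃ V : VF n,
            IsIterBrkt (fieldX1 n) (fieldX2 n) k V ∧ v = V z}) = 5 ∧
      Submodule.span ℝ
          {v : Fin n → ℝ | ∃ k : ℕ, ∃ V : VF n,
            IsIterBrkt (fieldX1 n) (fieldX2 n) k V ∧ v = V z} = ⊤ := by
  intro z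
  have hli := linearIndependent_brackets_le_three hn z
  refine ⟨finrank_span_triple hli.triple_of_quintuple, ?_, ?_⟩
  · rw [span_iterBrkt_le_three]
    exact finrank_span_quintuple hli
  · refine Submodule.eq_top_of_single_mem _ ⟨0, by omega⟩ (fun i hi => ?_)
      (Submodule.subset_span ⟨1, _, .base1, rfl⟩) (by simp [fieldX1])
    rw [← basisVec_val_eq_single]
    exact basisVec_mem_span_iterBrkt hn z (Nat.one_le_iff_ne_zero.2 fun h => hi (Fin.ext h))
      i.isLt
end
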